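/- Let S be a nonnegative integrable random variable on a probability space with m := 1 − E[S] ∈ [0,1), fix T > 0 and let α ∈ [0,1] be such that α·m = 0 (i.e. either α = 0, or m = 0 in which case any α ∈ [0,1] is allowed and Put- and Call-implied volatilities coincide). Let x₀ ∈ ℝ and let I : ℝ → [0,∞) be any function satisfying C_BS(x, I(x)) = E[(S − e^x)₊] + α·m for all x ≥ x₀. Then I(x) − √(2x/T) tends to −∞ as x → ∞. -/

import Mathlib

open MeasureTheory Filter

/-- Standard normal cumulative distribution function. -/
noncomputable def stdNormalCDF (y : ℝ) : ℝ :=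
  ∫ t in Set.Iic y, Real.exp (-t ^ 2 / 2) / Real.sqrt (2 * Real.pi)

/-- Black-Scholes d₊ (maturity `T`, log-strike `x`, volatility `σ`). -/
noncomputable def dplus (T x σ : ℝ) : ℝ := -x / (σ * Real.sqrt T) + σ * Real.sqrt T / 2

/-- Black-Scholes d₋ (maturity `T`, log-strike `x`, volatility `σ`). -/
noncomputable def dminus (T x σ : ℝ) : ℝ := -x / (σ * Real.sqrt T) - σ * Real.sqrt T / 2

/-- Black-Scholes Call price (maturity `T`, log-strike `x`, volatility `σ`),
with the convention `CBS T x 0 = max (1 - exp x) 0`. -/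
noncomputable def CBS (T x σ : ℝ) : ℝ :=
  if σ = 0 then max (1 - Real.exp x) 0
  else stdNormalCDF (dplus T x σ) - Real.exp x * stdNormalCDF (dminus T x σ)

/-- Black-Scholes Put price (maturity `T`, log-strike `x`, volatility `σ`),
with the convention `PBS T x 0 = max (exp x - 1) 0`. -/
noncomputable def PBS (T x σ : ℝ) : ℝ :=
  if σ = 0 then max (Real.exp x - 1) 0
  else Real.exp x * stdNormalCDF (-dminus T x σ) - stdNormalCDF (-dplus T x σ)

/-!
Fix `c` and follow the curve `σ(x) = √(2x/T) - c`. Writing `v = σ√T`, one has `2x = (v + c√T)²`,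
hence `d₊ = -c√T - (c√T)²/(2v) → -c√T` and `d₋ = d₊ - v → -∞`. The Mills-ratio bound
`N(d) ≤ φ(d)/(-d)` for `d < 0`, together with `eˣ φ(d₋) = φ(d₊)`, makes the second Black–Scholes
term vanish, so `C_BS(x, σ(x)) → N(-c√T) > 0`, whereas the Call price `E[(S - eˣ)₊] + αm` equals
`E[(S - eˣ)₊] → 0`. As `C_BS` is strictly increasing in the volatility, `I(x) < σ(x)` for all
large `x`.
-/

open Topology Real

noncomputable def stdNormalPDF (t : ℝ) : ℝ := exp (-t ^ 2 / 2) / √(2 * π)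

lemma stdNormalPDF_pos (t : ℝ) : 0 < stdNormalPDF t := by
  unfold stdNormalPDF
  positivity

lemma continuous_stdNormalPDF : Continuous stdNormalPDF := by
  unfold stdNormalPDF
  fun_prop

lemma integrable_stdNormalPDF : Integrable stdNormalPDF :=
  ((integrable_exp_neg_mul_sq (by norm_num : (0 : ℝ) < 1 / 2)).div_const √(2 * π)).congr
    (.of_forall fun t => by simp only [stdNormalPDF]; ring_nf)

lemma integrable_neg_mul_stdNormalPDF : Integrable fun t => -t * stdNormalPDF t :=
  ((integrable_mul_exp_neg_mul_sq (by norm_num : (0 : ℝ) < 1 / 2)).neg.div_const √(2 * π)).congr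
    (.of_forall fun t => by simp only [Pi.neg_apply, stdNormalPDF]; ring_nf)

lemma hasDerivAt_stdNormalPDF (t : ℝ) : HasDerivAt stdNormalPDF (-t * stdNormalPDF t) t := by
  have h : HasDerivAt (fun s : ℝ => -s ^ 2 / 2) (-t) t :=
    ((hasDerivAt_pow 2 t).fun_neg.div_const 2).congr_deriv (by push_cast; ring)
  exact (h.exp.div_const √(2 * π)).congr_deriv (by simp only [stdNormalPDF]; ring)

lemma stdNormalCDF_eq_integral (y : ℝ) :
    stdNormalCDF y = ∫ t in Set.Iic y, stdNormalPDF t := rfl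

lemma integral_Iic_neg_mul_stdNormalPDF (a : ℝ) :
    ∫ t in Set.Iic a, -t * stdNormalPDF t = stdNormalPDF a := by
  have hderiv : ∀ t ∈ Set.Iic a, HasDerivAt stdNormalPDF (-t * stdNormalPDF t) t :=
    fun t _ => hasDerivAt_stdNormalPDF t
  rw [integral_Iic_of_hasDerivAt_of_tendsto' hderiv integrable_neg_mul_stdNormalPDF.integrableOn
    (tendsto_zero_of_hasDerivAt_of_integrableOn_Iic hderiv
      integrable_neg_mul_stdNormalPDF.integrableOn integrable_stdNormalPDF.integrableOn), sub_zero]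

lemma stdNormalCDF_le_of_neg {a : ℝ} (ha : a < 0) : stdNormalCDF a ≤ stdNormalPDF a / -a := by
  calc stdNormalCDF a = ∫ t in Set.Iic a, stdNormalPDF t := stdNormalCDF_eq_integral a
    _ ≤ ∫ t in Set.Iic a, -t * stdNormalPDF t / -a := by
      refine setIntegral_mono_on integrable_stdNormalPDF.integrableOn
        (integrable_neg_mul_stdNormalPDF.div_const _).integrableOn measurableSet_Iic fun t ht => ?_
      rw [le_div_iff₀ (neg_pos.2 ha)]
      nlinarith [stdNormalPDF_pos t, ht.out]
    _ = stdNormalPDF a / -a := by rw [integral_div, integral_Iic_neg_mul_stdNormalPDF]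

lemma hasDerivAt_stdNormalCDF (y : ℝ) : HasDerivAt stdNormalCDF (stdNormalPDF y) y := by
  have hsplit : ∀ z, stdNormalCDF z = stdNormalCDF 0 + ∫ t in (0 : ℝ)..z, stdNormalPDF t := by
    intro z
    rw [stdNormalCDF_eq_integral, stdNormalCDF_eq_integral,
      ← intervalIntegral.integral_Iic_sub_Iic integrable_stdNormalPDF.integrableOn
        integrable_stdNormalPDF.integrableOn]
    ring
  rw [funext hsplit]
  exact (intervalIntegral.integral_hasDerivAt_right
    (continuous_stdNormalPDF.intervalIntegrable 0 y)
    (continuous_stdNormalPDF.stronglyMeasurableAtFilter _ _)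
    continuous_stdNormalPDF.continuousAt).const_add _

lemma continuous_stdNormalCDF : Continuous stdNormalCDF :=
  continuous_iff_continuousAt.2 fun y => (hasDerivAt_stdNormalCDF y).continuousAt

lemma stdNormalCDF_pos (y : ℝ) : 0 < stdNormalCDF y := by
  have hsupp : Function.support stdNormalPDF = Set.univ :=
    Set.eq_univ_of_forall fun t => (stdNormalPDF_pos t).ne'
  rw [stdNormalCDF_eq_integral, setIntegral_pos_iff_support_of_nonneg_ae
    (.of_forall fun t => (stdNormalPDF_pos t).le) integrable_stdNormalPDF.integrableOn]
  simp [hsupp]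

lemma dminus_eq_dplus_sub (T x σ : ℝ) : dminus T x σ = dplus T x σ - σ * √T := by
  unfold dminus dplus
  ring

lemma exp_mul_stdNormalPDF_dminus {T : ℝ} (x : ℝ) {σ : ℝ} (hσ : σ * √T ≠ 0) :
    exp x * stdNormalPDF (dminus T x σ) = stdNormalPDF (dplus T x σ) := by
  unfold stdNormalPDF
  rw [mul_div_assoc', ← exp_add]
  congr 2
  unfold dplus dminus
  generalize σ * √T = u at hσ ⊢
  field_simp
  ring

lemma dplus_eq_of_sq_eq {T x σ v k : ℝ} (hv : σ * √T = v) (hv0 : v ≠ 0) (hx : 2 * x = (v + k) ^ 2) :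
    dplus T x σ = -k - k ^ 2 / (2 * v) := by
  unfold dplus
  rw [hv]
  field_simp
  linear_combination -hx

lemma hasDerivAt_dplus (T x : ℝ) {σ : ℝ} (hσ : σ ≠ 0) :
    HasDerivAt (dplus T x) (x / √T / σ ^ 2 + √T / 2) σ := by
  have hdplus : dplus T x = fun s => -x / √T * s⁻¹ + s * (√T / 2) := by
    funext s
    simp only [dplus, div_eq_mul_inv, mul_inv]
    ring
  rw [hdplus]
  exact (((hasDerivAt_inv hσ).const_mul (-x / √T)).fun_add
    ((hasDerivAt_id' σ).mul_const (√T / 2))).congr_deriv (by ring)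

lemma hasDerivAt_CBS {T : ℝ} (hT : 0 < T) (x : ℝ) {σ : ℝ} (hσ : σ ≠ 0) :
    HasDerivAt (CBS T x) (stdNormalPDF (dplus T x σ) * √T) σ := by
  have hσT : σ * √T ≠ 0 := mul_ne_zero hσ (sqrt_pos.2 hT).ne'
  have hdplus := hasDerivAt_dplus T x hσ
  have hdminus : HasDerivAt (dminus T x) (x / √T / σ ^ 2 + √T / 2 - √T) σ := by
    rw [funext (dminus_eq_dplus_sub T x)]
    simpa using hdplus.fun_sub ((hasDerivAt_id' σ).mul_const √T)
  have hprice := ((hasDerivAt_stdNormalCDF _).comp σ hdplus).sub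
    (((hasDerivAt_stdNormalCDF _).comp σ hdminus).const_mul (exp x))
  refine (hprice.congr_deriv ?_).congr_of_eventuallyEq ?_
  · linear_combination (√T / 2 - x / √T / σ ^ 2) * exp_mul_stdNormalPDF_dminus x hσT
  · filter_upwards [eventually_ne_nhds hσ] with s hs
    simp [CBS, hs]

lemma strictMonoOn_CBS {T : ℝ} (hT : 0 < T) (x : ℝ) : StrictMonoOn (CBS T x) (Set.Ioi 0) := by
  refine strictMonoOn_of_deriv_pos (convex_Ioi 0)
    (fun σ hσ => (hasDerivAt_CBS hT x (ne_of_gt hσ)).continuousAt.continuousWithinAt) fun σ hσ => ?_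
  rw [interior_Ioi] at hσ
  rw [(hasDerivAt_CBS hT x (ne_of_gt hσ)).deriv]
  exact mul_pos (stdNormalPDF_pos _) (sqrt_pos.2 hT)

lemma tendsto_CBS_of_tendsto_dplus {ι : Type*} {l : Filter ι} {T a : ℝ} {x σ : ι → ℝ} (hT : 0 < T)
    (hσ : ∀ᶠ i in l, σ i ≠ 0) (hplus : Tendsto (fun i => dplus T (x i) (σ i)) l (𝓝 a))
    (hminus : Tendsto (fun i => dminus T (x i) (σ i)) l atBot) :
    Tendsto (fun i => CBS T (x i) (σ i)) l (𝓝 (stdNormalCDF a)) := by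
  have hbound : Tendsto (fun i => stdNormalPDF (dplus T (x i) (σ i)) / -dminus T (x i) (σ i)) l
      (𝓝 0) :=
    ((continuous_stdNormalPDF.tendsto a).comp hplus).div_atTop
      (tendsto_neg_atBot_atTop.comp hminus)
  have hsecond : Tendsto (fun i => exp (x i) * stdNormalCDF (dminus T (x i) (σ i))) l (𝓝 0) := by
    refine tendsto_of_tendsto_of_tendsto_of_le_of_le' tendsto_const_nhds hbound
      (.of_forall fun i => mul_nonneg (exp_pos _).le (stdNormalCDF_pos _).le) ?_
    filter_upwards [hσ, hminus.eventually_lt_atBot 0] with i hσi hneg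
    calc exp (x i) * stdNormalCDF (dminus T (x i) (σ i))
        ≤ exp (x i) * (stdNormalPDF (dminus T (x i) (σ i)) / -dminus T (x i) (σ i)) :=
          mul_le_mul_of_nonneg_left (stdNormalCDF_le_of_neg hneg) (exp_pos _).le
      _ = stdNormalPDF (dplus T (x i) (σ i)) / -dminus T (x i) (σ i) := by
          rw [mul_div_assoc', exp_mul_stdNormalPDF_dminus _
            (mul_ne_zero hσi (sqrt_pos.2 hT).ne')]
  have hlim := ((continuous_stdNormalCDF.tendsto a).comp hplus).sub hsecond
  rw [sub_zero] at hlim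
  refine hlim.congr' ?_
  filter_upwards [hσ] with i hσi
  simp [CBS, hσi]

lemma tendsto_CBS_sqrt_sub {T : ℝ} (hT : 0 < T) (c : ℝ) :
    Tendsto (fun x => CBS T x (√(2 * x / T) - c)) atTop (𝓝 (stdNormalCDF (-(c * √T)))) := by
  set k := c * √T
  set v : ℝ → ℝ := fun x => √(2 * x) - k
  have hv : Tendsto v atTop atTop := tendsto_atTop_add_const_right _ _
    (tendsto_sqrt_atTop.comp (tendsto_id.const_mul_atTop (two_pos : (0 : ℝ) < 2)))
  have hg : Tendsto (fun w : ℝ => -k - k ^ 2 / (2 * w)) atTop (𝓝 (-k)) := by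
    simpa using tendsto_const_nhds.sub
      (tendsto_const_nhds.div_atTop (tendsto_id.const_mul_atTop (two_pos : (0 : ℝ) < 2)))
  have hcurve : ∀ᶠ x in atTop, (√(2 * x / T) - c) * √T = v x ∧ v x ≠ 0 ∧
      dplus T x (√(2 * x / T) - c) = -k - k ^ 2 / (2 * v x) := by
    filter_upwards [hv.eventually_gt_atTop 0, eventually_ge_atTop 0] with x hvx hx
    have hscale : (√(2 * x / T) - c) * √T = v x := by
      rw [sub_mul, ← sqrt_mul (by positivity), div_mul_cancel₀ _ hT.ne']
    refine ⟨hscale, hvx.ne', dplus_eq_of_sq_eq hscale hvx.ne' ?_⟩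
    simp only [v, sub_add_cancel, sq_sqrt (by positivity : (0 : ℝ) ≤ 2 * x)]
  have hplus : Tendsto (fun x => dplus T x (√(2 * x / T) - c)) atTop (𝓝 (-k)) :=
    (hg.comp hv).congr' (hcurve.mono fun x hx => hx.2.2.symm)
  refine tendsto_CBS_of_tendsto_dplus hT
    (hcurve.mono fun x hx => left_ne_zero_of_mul (hx.1 ▸ hx.2.1)) hplus ?_
  refine (hplus.add_atBot (tendsto_neg_atTop_atBot.comp hv)).congr' ?_
  filter_upwards [hcurve] with x hx
  rw [dminus_eq_dplus_sub, hx.1, sub_eq_add_neg]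
  rfl

lemma tendsto_integral_max_sub_exp_atTop {Ω : Type*} [MeasurableSpace Ω] {μ : Measure Ω}
    {S : Ω → ℝ} (hS : Integrable S μ) :
    Tendsto (fun x : ℝ => ∫ ω, max (S ω - exp x) 0 ∂μ) atTop (𝓝 0) := by
  have h := tendsto_integral_filter_of_dominated_convergence (fun ω => ‖S ω‖)
    (.of_forall fun x =>
      ((hS.aemeasurable.sub_const _).max aemeasurable_const).aestronglyMeasurable)
    (.of_forall fun x => .of_forall fun ω => by
      rw [norm_of_nonneg (le_max_right _ _), norm_eq_abs]
      exact max_le (by linarith [le_abs_self (S ω), exp_pos x]) (abs_nonneg _))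
    hS.norm
    (.of_forall fun ω => tendsto_const_nhds.congr' <|
      (tendsto_exp_atTop.eventually_ge_atTop (S ω)).mono fun x hx =>
        (max_eq_right (by linarith)).symm)
  simpa using h

theorem iv_right_wing_degenerate_case_general
    {Ω : Type*} [MeasurableSpace Ω] (μ : Measure Ω)
    (S : Ω → ℝ) (hSint : Integrable S μ)
    (m : ℝ)
    (T : ℝ) (hT : 0 < T) (α : ℝ) (hαm : α * m = 0)
    (x₀ : ℝ) (I : ℝ → ℝ)
    (hI : ∀ x : ℝ, x₀ ≤ x →
      CBS T x (I x) = (∫ ω, max (S ω - Real.exp x) 0 ∂μ) + α * m) :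
    Tendsto (fun x => I x - Real.sqrt (2 * x / T)) atTop atBot := by
  refine tendsto_atBot.2 fun b => ?_
  have hcall_lt : ∀ᶠ x in atTop, ∫ ω, max (S ω - exp x) 0 ∂μ < CBS T x (√(2 * x / T) + b) := by
    simpa using (tendsto_integral_max_sub_exp_atTop hSint).eventually_lt
      (tendsto_CBS_sqrt_sub hT (-b)) (stdNormalCDF_pos _)
  have hσ_pos : ∀ᶠ x in atTop, 0 < √(2 * x / T) + b :=
    (tendsto_atTop_add_const_right _ b <| tendsto_sqrt_atTop.comp <|
      (tendsto_id.const_mul_atTop (two_pos : (0 : ℝ) < 2)).atTop_div_const hT).eventually_gt_atTop 0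
  filter_upwards [hcall_lt, hσ_pos, eventually_ge_atTop x₀] with x hlt hσ hx
  have hI_lt : I x < √(2 * x / T) + b := by
    by_contra! hle
    have hprice_le := (strictMonoOn_CBS hT x).monotoneOn hσ (hσ.trans_le hle) hle
    rw [hI x hx, hαm, add_zero] at hprice_le
    exact hlt.not_ge hprice_le
  linarith

/-- in the degenerate case `α·m = 0` (uncollateralised Call, or true
martingale), `I(x) - √(2x/T)` tends to `-∞` as `x → ∞`. -/
theorem iv_right_wing_degenerate_case
    {Ω : Type*} [MeasurableSpace Ω] (μ : Measure Ω) [IsProbabilityMeasure μ]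
    (S : Ω → ℝ) (hS : ∀ ω, 0 ≤ S ω) (hSint : Integrable S μ)
    (m : ℝ) (hm : m = 1 - ∫ ω, S ω ∂μ) (hm0 : 0 ≤ m) (hm1 : m < 1)
    (T : ℝ) (hT : 0 < T) (α : ℝ) (hα : α ∈ Set.Icc (0:ℝ) 1) (hαm : α * m = 0)
    (x₀ : ℝ) (I : ℝ → ℝ) (hInonneg : ∀ x, 0 ≤ I x)
    (hI : ∀ x : ℝ, x₀ ≤ x →
      CBS T x (I x) = (∫ ω, max (S ω - Real.exp x) 0 ∂μ) + α * m) :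
    Tendsto (fun x => I x - Real.sqrt (2 * x / T)) atTop atBot :=
  iv_right_wing_degenerate_case_general μ S hSint m T hT α hαm x₀ I hI
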